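/- arXiv:1507.02170 — 6 statements merged into one kernel-verified Lean document; each statement's English description precedes it below -/
import Mathlib

section
/- Let G be a nonabelian simple group containing an involution h and an element g such that {g, g^h} generates G. Then g⁻¹ ∉ {g, hg, gh, hgh}. -/
/-!
If `g⁻¹ = hg` or `g⁻¹ = gh` then `h = g⁻²`, and if `g⁻¹ = hgh` then `g^h = g⁻¹`; either way
`g^h ∈ ⟨g⟩`, so `G = ⟨g, g^h⟩` is cyclic. If `g⁻¹ = g`, then `G` is generated by the two
involutions `g` and `g^h`, each of which inverts their product `c`; hence `⟨c⟩` is normal, and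
simplicity forces `⟨c⟩ = G` or `c = 1`, so `G` is again cyclic.
-/

open Subgroup

section

variable {G : Type*} [Group G]

theorem isCyclic_of_closure_pair_eq_top_of_mem_zpowers {a b : G}
    (hgen : closure {a, b} = ⊤) (hb : b ∈ zpowers a) : IsCyclic G := by
  refine isCyclic_iff_exists_zpowers_eq_top.mpr ⟨a, eq_top_iff.mpr ?_⟩
  rw [← hgen, closure_le]
  rintro z (rfl | rfl)
  exacts [mem_zpowers z, hb]

theorem mem_normalizer_zpowers_of_conj_eq_inv {c x : G} (hx : x * c * x⁻¹ = c⁻¹) :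
    x ∈ normalizer (zpowers c : Set G) := by
  have hx' : x⁻¹ * c * x = c⁻¹ :=
    calc x⁻¹ * c * x = x⁻¹ * (x * c * x⁻¹)⁻¹ * x := by rw [hx, inv_inv]
      _ = c⁻¹ := by group
  refine mem_normalizer_iff.mpr fun y => ?_
  simp only [mem_zpowers_iff]
  constructor
  · rintro ⟨k, rfl⟩
    exact ⟨-k, by rw [← conj_zpow, hx, zpow_neg, inv_zpow]⟩
  · rintro ⟨k, hk⟩
    refine ⟨-k, ?_⟩
    have hy : y = x⁻¹ * c ^ k * x := by rw [hk]; group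
    have hconj : (x⁻¹ * c * x) ^ k = x⁻¹ * c ^ k * x := by
      simpa only [inv_inv] using conj_zpow (a := x⁻¹) (b := c) (i := k)
    rw [hy, ← hconj, hx', zpow_neg, inv_zpow]

theorem isCyclic_of_closure_pair_eq_top_of_mul_self_eq_one [IsSimpleGroup G] {a b : G}
    (ha : a * a = 1) (hb : b * b = 1) (hgen : closure {a, b} = ⊤) : IsCyclic G := by
  have ha' : a⁻¹ = a := inv_eq_of_mul_eq_one_right ha
  have hb' : b⁻¹ = b := inv_eq_of_mul_eq_one_right hb
  have hnormal : (zpowers (a * b)).Normal := by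
    rw [← normalizer_eq_top_iff, eq_top_iff, ← hgen, closure_le]
    rintro z (rfl | rfl) <;> apply mem_normalizer_zpowers_of_conj_eq_inv
    · rw [mul_inv_rev, ha', hb', ← mul_assoc, ha, one_mul]
    · rw [mul_inv_rev, ha', hb', mul_assoc, mul_assoc, hb, mul_one]
  rcases IsSimpleGroup.eq_bot_or_eq_top_of_normal _ hnormal with hbot | htop
  · have hab : a * b = 1 := by simpa [hbot] using mem_zpowers (a * b)
    refine isCyclic_of_closure_pair_eq_top_of_mem_zpowers hgen ?_
    rw [eq_inv_of_mul_eq_one_right hab]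
    exact inv_mem (mem_zpowers a)
  · exact isCyclic_iff_exists_zpowers_eq_top.mpr ⟨a * b, htop⟩

end

theorem stmt_4_general {G : Type*} [Group G] [IsSimpleGroup G]
    (hnab : ∃ x y : G, x * y ≠ y * x)
    (h g : G) (hh2 : h ^ 2 = 1)
    (hgen : Subgroup.closure {g, h⁻¹ * g * h} = ⊤) :
    g⁻¹ ∉ ({g, h * g, g * h, h * g * h} : Set G) := by
  obtain ⟨x, y, hxy⟩ := hnab
  intro hmem
  suffices IsCyclic G from hxy (IsCyclic.commGroup.mul_comm x y)
  have hh : h⁻¹ = h := inv_eq_of_mul_eq_one_right (by rw [← sq, hh2])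
  have hconj_mem : h ∈ zpowers g → h⁻¹ * g * h ∈ zpowers g := fun hhg =>
    mul_mem (mul_mem (inv_mem hhg) (mem_zpowers g)) hhg
  rcases hmem with hc | hc | hc | hc
  · have hg : g * g = 1 := mul_eq_one_iff_eq_inv.mpr hc.symm
    refine isCyclic_of_closure_pair_eq_top_of_mul_self_eq_one hg ?_ hgen
    rw [show h⁻¹ * g * h * (h⁻¹ * g * h) = h⁻¹ * (g * g) * h by group, hg]
    group
  · refine isCyclic_of_closure_pair_eq_top_of_mem_zpowers hgen (hconj_mem ?_)
    rw [eq_mul_inv_of_mul_eq hc.symm]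
    exact mul_mem (inv_mem (mem_zpowers g)) (inv_mem (mem_zpowers g))
  · refine isCyclic_of_closure_pair_eq_top_of_mem_zpowers hgen (hconj_mem ?_)
    rw [eq_inv_mul_of_mul_eq hc.symm]
    exact mul_mem (inv_mem (mem_zpowers g)) (inv_mem (mem_zpowers g))
  · refine isCyclic_of_closure_pair_eq_top_of_mem_zpowers hgen ?_
    rw [hh, ← hc]
    exact inv_mem (mem_zpowers g)

/-- If a finite nonabelian simple group `G` contains an involution `h` and an
element `g` with `⟨g, g^h⟩ = G`, then `g⁻¹ ∉ {g, hg, gh, hgh}` (the double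
coset `⟨h⟩g⟨h⟩`). -/
theorem stmt_4 {G : Type*} [Group G] [Finite G] [IsSimpleGroup G]
    (hnab : ∃ x y : G, x * y ≠ y * x)
    (h g : G) (hh2 : h ^ 2 = 1) (hh1 : h ≠ 1)
    (hgen : Subgroup.closure {g, h⁻¹ * g * h} = ⊤) :
    g⁻¹ ∉ ({g, h * g, g * h, h * g * h} : Set G) :=
  stmt_4_general hnab h g hh2 hgen
end

section
/- Let n ≥ 5 be odd, m = (n-1)/2, and in Sym(n) let H = ⟨(i, i+m) : i = 1, …, m⟩ and g = (1, 2, …, n) the n-cycle. Then ⟨H, g⟩ = Sym(n). -/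
/-!
For `n = 2m + 1` the step `m` is coprime to `n`, so `(finRotate n)^m` generates the same cyclic
group and is an `n`-cycle along which `0` and `m` are adjacent. An `n`-cycle together with the
transposition of two of its adjacent points generates `Sym(n)`, so the `n`-cycle and the single
transposition `(0, m)` already suffice.
-/

open Equiv Equiv.Perm

theorem finRotate_pow_apply_zero {n j : ℕ} (hj : j < n) :
    (finRotate n ^ j) ⟨0, by omega⟩ = ⟨j, hj⟩ := by
  induction j with
  | zero => rfl
  | succ j ih =>
    obtain ⟨n, rfl⟩ : ∃ n', n = n' + 1 := ⟨n - 1, by omega⟩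
    rw [pow_succ', Perm.mul_apply, ih (by omega), finRotate_of_lt (by omega)]

theorem closure_finRotate_swap_eq_top {n j : ℕ} (h2 : 2 ≤ n) (hj : j < n) (hcop : j.Coprime n) :
    Subgroup.closure {finRotate n, swap ⟨0, by omega⟩ ⟨j, hj⟩} = ⊤ := by
  have h := closure_cycle_coprime_swap (by rwa [Fintype.card_fin]) (isCycle_finRotate_of_le h2)
    (support_finRotate_of_le h2) (⟨0, by omega⟩ : Fin n)
  rwa [finRotate_pow_apply_zero hj] at h

/-- For odd `n ≥ 5` and `m = (n-1)/2`, the subgroup of `Sym(n)` generated by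
the transpositions `(i, i+m)` for `i = 1, …, m` together with the `n`-cycle
`(1 2 … n)` is all of `Sym(n)`. (Points are indexed by `Fin n`, so the
transpositions are `swap a b` with `a < m`, `b = a + m`, and the `n`-cycle is
`finRotate n`.) -/
theorem stmt_6 (n m : ℕ) (hn : Odd n) (h5 : 5 ≤ n) (hm : m = (n - 1) / 2) :
    Subgroup.closure {σ : Equiv.Perm (Fin n) |
        ∃ a b : Fin n, (a : ℕ) < m ∧ (b : ℕ) = (a : ℕ) + m ∧ σ = Equiv.swap a b}
      ⊔ Subgroup.zpowers (finRotate n) = ⊤ := by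
  obtain ⟨k, rfl⟩ := hn
  obtain rfl : m = k := by omega
  have hcop : m.Coprime (2 * m + 1) :=
    (Nat.coprime_mul_right_add_right m 1 2).mpr m.coprime_one_right
  rw [eq_top_iff, ← closure_finRotate_swap_eq_top (by omega) (by omega) hcop, Subgroup.closure_le]
  rintro σ (rfl | rfl)
  · exact Subgroup.mem_sup_right (Subgroup.mem_zpowers _)
  · exact Subgroup.mem_sup_left <|
      Subgroup.subset_closure ⟨_, _, show 0 < m by omega, (zero_add m).symm, rfl⟩
end

section
/- Let n ≥ 5 be odd, m = (n-1)/2, H = ⟨(i, i+m) : i = 1, …, m⟩ ≤ Sym(n), and g = (1, 2, …, n). Then g⁻¹ ∉ HgH. -/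
/-!
If `g⁻¹ = h g h'` with `h, h' ∈ H`, then `g h g = h'⁻¹ ∈ H`. Every generator of `H` moves only
points below `2m`, so `H` fixes the last point `n - 1`; and a generator `(a, a + m)` moves `0` or `m`
only if it swaps them, so `H` stabilises `{0, m}`. Since `g` sends `n - 1` to `0`, the element
`g h g` fixes `n - 1` only if `h 0 = n - 2`, which lies outside `{0, m}` once `n ≥ 5`.
-/

open Equiv MulAction Pointwise

lemma Equiv.swap_mem_stabilizer_set {α : Type*} [DecidableEq α] {s : Set α} {a b : α}
    (h : a ∈ s ↔ b ∈ s) : swap a b ∈ stabilizer (Perm α) s := by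
  rw [mem_stabilizer_set]
  intro x
  rw [Perm.smul_def, swap_apply_def]
  split_ifs with hxa hxb
  · rw [hxa, h]
  · rw [hxb, h]
  · rfl

lemma Subgroup.closure_le_stabilizer_set_of_swaps {α : Type*} [DecidableEq α]
    {S : Set (Perm α)} {s : Set α} (hS : ∀ σ ∈ S, ∃ a b, (a ∈ s ↔ b ∈ s) ∧ σ = swap a b) :
    closure S ≤ stabilizer (Perm α) s := by
  rw [closure_le]
  intro σ hσ
  obtain ⟨a, b, hab, rfl⟩ := hS σ hσ
  exact swap_mem_stabilizer_set hab

def pairSwaps (n m : ℕ) : Set (Perm (Fin n)) :=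
  {σ | ∃ a b : Fin n, (a : ℕ) < m ∧ (b : ℕ) = a + m ∧ σ = swap a b}

lemma apply_mem_of_mem_closure_pairSwaps {n m : ℕ} {s : Set (Fin n)}
    (hs : ∀ a b : Fin n, (a : ℕ) < m → (b : ℕ) = a + m → (a ∈ s ↔ b ∈ s))
    {σ : Perm (Fin n)} (hσ : σ ∈ Subgroup.closure (pairSwaps n m)) {x : Fin n} (hx : x ∈ s) :
    σ x ∈ s := by
  have hstab := Subgroup.closure_le_stabilizer_set_of_swaps (s := s) (by
    rintro _ ⟨a, b, ha, hb, rfl⟩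
    exact ⟨a, b, hs a b ha hb, rfl⟩) hσ
  exact (mem_stabilizer_set.mp hstab x).mpr hx

theorem stmt_8_general (n m : ℕ) (h5 : 5 ≤ n) (hm : m = (n - 1) / 2)
    (H : Subgroup (Equiv.Perm (Fin n)))
    (hH : H = Subgroup.closure {σ | ∃ a b : Fin n,
      (a : ℕ) < m ∧ (b : ℕ) = (a : ℕ) + m ∧ σ = Equiv.swap a b})
    (g : Equiv.Perm (Fin n)) (hg : g = finRotate n) :
    ¬ ∃ h ∈ H, ∃ h' ∈ H, g⁻¹ = h * g * h' := by
  rintro ⟨h, hh, h', hh', heq⟩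
  obtain ⟨k, rfl⟩ : ∃ k, n = k + 1 := ⟨n - 1, by omega⟩
  have hghg : g * h * g ∈ H := by
    have : g * h * g = h'⁻¹ := by
      calc g * h * g = g * (h * g * h') * h'⁻¹ := by group
        _ = h'⁻¹ := by rw [← heq]; group
    exact this ▸ inv_mem hh'
  subst hH hg
  have hfix : finRotate (k + 1) (h (finRotate (k + 1) (Fin.last k))) = Fin.last k := by
    simpa using apply_mem_of_mem_closure_pairSwaps (s := {Fin.last k})
      (fun a b ha hb ↦ by
        simp only [Set.mem_singleton_iff, Fin.ext_iff, Fin.val_last]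
        omega) hghg (Set.mem_singleton _)
  have horbit : ((h 0 : Fin (k + 1)) : ℕ) = 0 ∨ ((h 0 : Fin (k + 1)) : ℕ) = m :=
    apply_mem_of_mem_closure_pairSwaps (s := {x | (x : ℕ) = 0 ∨ (x : ℕ) = m})
      (fun a b ha hb ↦ by simp only [Set.mem_ofPred_eq]; omega) hh (by simp)
  rw [finRotate_last, Fin.ext_iff, coe_finRotate, Fin.val_last] at hfix
  split_ifs at hfix with hlast <;> rw [Fin.ext_iff, Fin.val_last] at hlast <;> omega

/-- For odd `n ≥ 5`, `m = (n-1)/2`, `H = ⟨(i, i+m) : i = 1, …, m⟩ ≤ Sym(n)`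
and `g = (1 2 … n)`, we have `g⁻¹ ∉ HgH`. -/
theorem stmt_8 (n m : ℕ) (hn : Odd n) (h5 : 5 ≤ n) (hm : m = (n - 1) / 2)
    (H : Subgroup (Equiv.Perm (Fin n)))
    (hH : H = Subgroup.closure {σ | ∃ a b : Fin n,
      (a : ℕ) < m ∧ (b : ℕ) = (a : ℕ) + m ∧ σ = Equiv.swap a b})
    (g : Equiv.Perm (Fin n)) (hg : g = finRotate n) :
    ¬ ∃ h ∈ H, ∃ h' ∈ H, g⁻¹ = h * g * h' :=
  stmt_8_general n m h5 hm H hH g hg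
end

section
/- Let Γ be a connected graph, G ≤ Aut(Γ) vertex-transitive, and N ◁ G. Suppose that for every vertex x, the neighbours of x lie in pairwise distinct N-orbits. If K ◁ G contains N and has the same orbits on vertices as N, then the stabiliser K_x is trivial for every vertex x; in particular K is semiregular on vertices. -/
/-!
An element `k ∈ K` fixing a vertex `x` maps each neighbour `y` of `x` to a neighbour of `x`
in the `K`-orbit, i.e. the `N`-orbit, of `y`; since distinct neighbours of `x` lie in distinct
`N`-orbits, `k` fixes `y`. By connectedness `k` fixes every vertex, so `k = 1` by faithfulness.
-/

open MulAction

theorem SimpleGraph.Reachable.of_adj_imp {V : Type*} {Γ : SimpleGraph V} {p : V → Prop}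
    (hp : ∀ a b, Γ.Adj a b → p a → p b) {u v : V} (huv : Γ.Reachable u v) (hu : p u) : p v := by
  obtain ⟨w⟩ := huv
  induction w with
  | nil => exact hu
  | cons hab _ ih => exact ih (hp _ _ hab hu)

theorem smul_eq_of_adj_of_smul_eq {V G : Type*} [Group G] [MulAction G V] {Γ : SimpleGraph V}
    {H : Subgroup G} {x y : V} {k : G}
    (hnbr : ∀ y z, Γ.Adj x y → Γ.Adj x z → y ≠ z → orbit H y ≠ orbit H z)
    (hk : ∀ a b, Γ.Adj a b → Γ.Adj (k • a) (k • b)) (hkorb : k • y ∈ orbit H y)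
    (hkx : k • x = x) (hxy : Γ.Adj x y) : k • y = y := by
  have hxky : Γ.Adj x (k • y) := hkx ▸ hk x y hxy
  by_contra hne
  exact hnbr y (k • y) hxy hxky (Ne.symm hne) (orbit_eq_iff.mpr hkorb).symm

theorem stmt_13_general {V : Type*} (Γ : SimpleGraph V) (hconn : Γ.Connected)
    {G : Type*} [Group G] [MulAction G V] [FaithfulSMul G V]
    (haut : ∀ (g : G) (x y : V), Γ.Adj x y → Γ.Adj (g • x) (g • y))
    (N K : Subgroup G)
    (horb : ∀ x : V, MulAction.orbit N x = MulAction.orbit K x)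
    (hnbr1 : ∀ x y z : V, Γ.Adj x y → Γ.Adj x z → y ≠ z →
      MulAction.orbit N y ≠ MulAction.orbit N z) :
    ∀ (x : V) (k : G), k ∈ K → k • x = x → k = 1 := by
  intro x k hk hkx
  have hkorb (y : V) : k • y ∈ orbit N y := horb y ▸ ⟨⟨k, hk⟩, rfl⟩
  have hfix (y : V) : k • y = y :=
    (hconn x y).of_adj_imp (fun a b hab hka =>
      smul_eq_of_adj_of_smul_eq (hnbr1 a) (haut k) (hkorb b) hka hab) hkx
  exact eq_of_smul_eq_smul fun y => by rw [hfix y, one_smul]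

/-- Let `Γ` be a connected graph, `G` a group acting faithfully on the
vertices by graph automorphisms and vertex-transitively, and let `N ≤ K` be
normal subgroups of `G` with the same vertex orbits. If for every vertex the
neighbours lie in pairwise distinct `N`-orbits (all different from the orbit
of the vertex itself), then every vertex stabiliser in `K` is trivial; in
particular `K` is semiregular on vertices. -/
theorem stmt_13 {V : Type*} (Γ : SimpleGraph V) (hconn : Γ.Connected)
    {G : Type*} [Group G] [MulAction G V] [FaithfulSMul G V]
    (haut : ∀ (g : G) (x y : V), Γ.Adj x y → Γ.Adj (g • x) (g • y))
    (htrans : MulAction.IsPretransitive G V)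
    (N K : Subgroup G) (hNn : N.Normal) (hKn : K.Normal) (hNK : N ≤ K)
    (horb : ∀ x : V, MulAction.orbit N x = MulAction.orbit K x)
    (hnbr1 : ∀ x y z : V, Γ.Adj x y → Γ.Adj x z → y ≠ z →
      MulAction.orbit N y ≠ MulAction.orbit N z)
    (hnbr2 : ∀ x y : V, Γ.Adj x y → MulAction.orbit N x ≠ MulAction.orbit N y) :
    ∀ (x : V) (k : G), k ∈ K → k • x = x → k = 1 :=
  stmt_13_general Γ hconn haut N K horb hnbr1
end

section
/- Let G be a group acting on a set X, transitive on s-arcs of a G-oriented 2-out-regular digraph but not transitive on (s+1)-arcs. Then the pointwise stabiliser H of any s-arc (x₀, …, x_s) fixes both out-neighbours of x_s. -/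
/-!
If `h` fixes the `s`-arc `f` but moves an out-neighbour `y` of its last vertex, then `h`
swaps the two out-neighbours of that vertex. Any `(s+1)`-arc can then be moved onto `f ⌢ y`:
`s`-arc-transitivity maps its first `s + 1` vertices onto `f`, which sends its last vertex to
`y` or to the other out-neighbour, and in the second case `h` finishes the job. So `G` would
be transitive on `(s+1)`-arcs.
-/

lemma Nat.eq_of_card_eq_two {α : Type*} (hα : Nat.card α = 2) {a b c : α}
    (hac : a ≠ c) (hbc : b ≠ c) : a = b :=
  ((Nat.card_eq_two_iff' c).mp hα).unique hac hbc

lemma MulAction.exists_smul_eq_of_forall_exists_smul_eq {G α : Type*} [Group G]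
    [MulAction G α] {P : α → Prop} {a : α} (h : ∀ b, P b → ∃ g : G, g • b = a)
    {b b' : α} (hb : P b) (hb' : P b') : ∃ g : G, g • b = b' := by
  obtain ⟨g, hg⟩ := h b hb
  obtain ⟨g', hg'⟩ := h b' hb'
  exact ⟨g'⁻¹ * g, by rw [mul_smul, hg, ← hg', inv_smul_smul]⟩

lemma Fin.smul_eq_snoc_iff {G X : Type*} [Group G] [MulAction G X] {n : ℕ} (g : G)
    (F : Fin (n + 2) → X) (f : Fin (n + 1) → X) (y : X) :
    g • F = Fin.snoc f y ↔ g • Fin.init F = f ∧ g • F (Fin.last (n + 1)) = y := by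
  rw [← Fin.snoc_init_self (g • F), Fin.snoc_inj]
  rfl

namespace Relation

variable {X : Type*} (Δ : X → X → Prop)

def IsArc {n : ℕ} (f : Fin (n + 1) → X) : Prop :=
  ∀ i : Fin n, Δ (f i.castSucc) (f i.succ)

variable {Δ}

lemma IsArc.init {n : ℕ} {F : Fin (n + 2) → X} (hF : IsArc Δ F) : IsArc Δ (Fin.init F) :=
  fun i => by simpa [Fin.init] using hF i.castSucc

lemma eq_or_smul_eq_of_smul_ne {G : Type*} [Group G] [MulAction G X]
    (hout : ∀ x : X, Nat.card {y : X // Δ x y} = 2)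
    (hinv : ∀ (g : G) (x y : X), Δ x y → Δ (g • x) (g • y))
    {h : G} {x y z : X} (hx : h • x = x) (hy : Δ x y) (hmoved : h • y ≠ y) (hz : Δ x z) :
    z = y ∨ h • z = y := by
  have out_smul : ∀ {w}, Δ x w → Δ x (h • w) := fun hw => hx ▸ hinv h x _ hw
  have eq_of_ne : ∀ {u v w}, Δ x u → Δ x v → Δ x w → u ≠ w → v ≠ w → u = v :=
    fun hu hv hw huw hvw =>
      congrArg Subtype.val (Nat.eq_of_card_eq_two (hout x) (a := ⟨_, hu⟩) (b := ⟨_, hv⟩)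
        (c := ⟨_, hw⟩) (by simpa using huw) (by simpa using hvw))
  by_cases hzy : z = y
  · exact .inl hzy
  -- `z` and `y` are the two out-neighbours, hence `z = h • y`, and `h • (h • y) = y`.
  obtain rfl : z = h • y := eq_of_ne hz (out_smul hy) hy hzy hmoved
  refine .inr (eq_of_ne (out_smul (out_smul hy)) hy (out_smul hy) ?_ hmoved.symm)
  exact fun hc => hmoved (smul_left_cancel h hc)

end Relation

open Relation in
/-- Let `G` act on `X` preserving a relation `Δ` in which every point has
exactly two out-neighbours, with `G` transitive on `s`-arcs but not on
`(s+1)`-arcs. Then the pointwise stabiliser of any `s`-arc `(x₀, …, x_s)`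
fixes both out-neighbours of `x_s`. -/
theorem stmt_15 {G X : Type*} [Group G] [MulAction G X]
    (Δ : X → X → Prop)
    (hinv : ∀ (g : G) (x y : X), Δ x y → Δ (g • x) (g • y))
    (hout : ∀ x : X, Nat.card {y : X // Δ x y} = 2)
    (s : ℕ)
    (htrans : ∀ f f' : Fin (s + 1) → X,
      (∀ i : Fin s, Δ (f i.castSucc) (f i.succ)) →
      (∀ i : Fin s, Δ (f' i.castSucc) (f' i.succ)) →
      ∃ g : G, g • f = f')
    (hnottrans : ¬ ∀ f f' : Fin (s + 2) → X,
      (∀ i : Fin (s + 1), Δ (f i.castSucc) (f i.succ)) →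
      (∀ i : Fin (s + 1), Δ (f' i.castSucc) (f' i.succ)) →
      ∃ g : G, g • f = f')
    (f : Fin (s + 1) → X) (hf : ∀ i : Fin s, Δ (f i.castSucc) (f i.succ))
    (h : G) (hfix : ∀ i, h • f i = f i) :
    ∀ y : X, Δ (f (Fin.last s)) y → h • y = y := by
  intro y hy
  by_contra hmoved
  suffices hmap : ∀ F : Fin (s + 2) → X, IsArc Δ F → ∃ g : G, g • F = Fin.snoc f y from
    hnottrans fun F F' hF hF' =>
      MulAction.exists_smul_eq_of_forall_exists_smul_eq hmap hF hF'
  intro F hF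
  obtain ⟨g, hg⟩ := htrans (Fin.init F) f hF.init hf
  have hlast : Δ (f (Fin.last s)) (g • F (Fin.last (s + 1))) := by
    simpa [← hg, Fin.init] using hinv g _ _ (hF (Fin.last s))
  rcases eq_or_smul_eq_of_smul_ne hout hinv (hfix _) hy hmoved hlast with hgF | hgF
  · exact ⟨g, (Fin.smul_eq_snoc_iff g F f y).mpr ⟨hg, hgF⟩⟩
  · refine ⟨h * g, (Fin.smul_eq_snoc_iff _ F f y).mpr ⟨?_, ?_⟩⟩
    · rw [mul_smul, hg]
      exact funext hfix
    · rwa [mul_smul]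
end

section
/- Let T be a finite nonabelian simple group, N = T × T, ι the swap automorphism of N, G = N ⋊ ⟨ι⟩. Suppose a ∈ T is an involution, b ∈ T, ⟨a, b⟩ = T, and b^g ≠ ba for every g ∈ Aut(T) centralizing a. Then N = ⟨(a, a), (b, ba)⟩. -/
/-!
Both projections of the subgroup are onto (the second because `⟨a, ba⟩ = ⟨a, b⟩`). By Goursat,
the elements of the form `(x, 1)`, resp. `(1, y)`, form normal subgroups of the simple group `T`.
If either is all of `T`, the subgroup is all of `T × T`; if both are trivial, the subgroup is
the graph of an automorphism `φ` with `φ a = a` and `φ b = b * a`, which the hypothesis excludes.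
-/

open Function

namespace Subgroup

variable {G H : Type*} [Group G] [Group H]

theorem closure_pair_mul_right (a b : G) : closure {a, b * a} = closure {a, b} := by
  have ha : a ∈ closure {a, b} := subset_closure (by simp)
  have hb : b ∈ closure {a, b} := subset_closure (by simp)
  have ha' : a ∈ closure {a, b * a} := subset_closure (by simp)
  have hba : b * a ∈ closure {a, b * a} := subset_closure (by simp)
  refine le_antisymm (closure_le _ |>.2 ?_) (closure_le _ |>.2 ?_)
  · simpa [Set.insert_subset_iff] using ⟨ha, mul_mem hb ha⟩
  · simpa [Set.insert_subset_iff] using ⟨ha', by simpa using mul_mem hba (inv_mem ha')⟩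

variable {I : Subgroup (G × H)}

theorem surjective_fst_comp_subtype_iff :
    Surjective (Prod.fst ∘ I.subtype) ↔ I.map (MonoidHom.fst G H) = ⊤ := by
  change Surjective ((MonoidHom.fst G H).comp I.subtype) ↔ _
  rw [← MonoidHom.range_eq_top, MonoidHom.range_comp, range_subtype]

theorem surjective_snd_comp_subtype_iff :
    Surjective (Prod.snd ∘ I.subtype) ↔ I.map (MonoidHom.snd G H) = ⊤ := by
  change Surjective ((MonoidHom.snd G H).comp I.subtype) ↔ _
  rw [← MonoidHom.range_eq_top, MonoidHom.range_comp, range_subtype]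

theorem eq_top_of_goursatFst_eq_top (h₂ : Surjective (Prod.snd ∘ I.subtype))
    (hI : I.goursatFst = ⊤) : I = ⊤ := by
  refine eq_top_iff.2 fun ⟨g, h⟩ _ ↦ ?_
  obtain ⟨⟨⟨g', h'⟩, hI'⟩, rfl⟩ := h₂ h
  have : (g * g'⁻¹, 1) ∈ I := mem_goursatFst.1 (hI ▸ mem_top _)
  simpa using mul_mem this hI'

theorem eq_top_of_goursatSnd_eq_top (h₁ : Surjective (Prod.fst ∘ I.subtype))
    (hI : I.goursatSnd = ⊤) : I = ⊤ := by
  refine eq_top_iff.2 fun ⟨g, h⟩ _ ↦ ?_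
  obtain ⟨⟨⟨g', h'⟩, hI'⟩, rfl⟩ := h₁ g
  have : (1, h'⁻¹ * h) ∈ I := mem_goursatSnd.1 (hI ▸ mem_top _)
  simpa using mul_mem hI' this

theorem injective_fst_comp_subtype_of_goursatSnd_eq_bot (hI : I.goursatSnd = ⊥) :
    Injective (Prod.fst ∘ I.subtype) := by
  rintro ⟨⟨g, h⟩, hx⟩ ⟨⟨g', h'⟩, hy⟩ (rfl : g = g')
  have : h⁻¹ * h' ∈ I.goursatSnd := mem_goursatSnd.2 (by simpa using mul_mem (inv_mem hx) hy)
  rw [hI, mem_bot, inv_mul_eq_one] at this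
  simp [this]

theorem injective_snd_comp_subtype_of_goursatFst_eq_bot (hI : I.goursatFst = ⊥) :
    Injective (Prod.snd ∘ I.subtype) := by
  rintro ⟨⟨g, h⟩, hx⟩ ⟨⟨g', h'⟩, hy⟩ (rfl : h = h')
  have : g⁻¹ * g' ∈ I.goursatFst := mem_goursatFst.2 (by simpa using mul_mem (inv_mem hx) hy)
  rw [hI, mem_bot, inv_mul_eq_one] at this
  simp [this]

theorem eq_top_or_exists_mulEquiv_eq_graph [IsSimpleGroup G] [IsSimpleGroup H]
    (h₁ : Surjective (Prod.fst ∘ I.subtype)) (h₂ : Surjective (Prod.snd ∘ I.subtype)) :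
    I = ⊤ ∨ ∃ e : G ≃* H, I = e.toMonoidHom.graph := by
  have := normal_goursatFst h₁
  have := normal_goursatSnd h₂
  obtain hFst | hFst := IsSimpleGroup.eq_bot_or_eq_top_of_normal I.goursatFst ‹_›
  · obtain hSnd | hSnd := IsSimpleGroup.eq_bot_or_eq_top_of_normal I.goursatSnd ‹_›
    · exact .inr <| exists_mulEquiv_eq_graph
        ⟨injective_fst_comp_subtype_of_goursatSnd_eq_bot hSnd, h₁⟩
        ⟨injective_snd_comp_subtype_of_goursatFst_eq_bot hFst, h₂⟩
    · exact .inl (eq_top_of_goursatSnd_eq_top h₁ hSnd)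
  · exact .inl (eq_top_of_goursatFst_eq_top h₂ hFst)

end Subgroup

theorem stmt_16_general {T : Type*} [Group T] [IsSimpleGroup T]
    (a b : T)
    (hgen : Subgroup.closure {a, b} = ⊤)
    (hb : ∀ φ : MulAut T, φ a = a → φ b ≠ b * a) :
    Subgroup.closure ({(a, a), (b, b * a)} : Set (T × T)) = ⊤ := by
  set I := Subgroup.closure ({(a, a), (b, b * a)} : Set (T × T))
  have h₁ : I.map (MonoidHom.fst T T) = ⊤ := by
    simpa [I, MonoidHom.map_closure, Set.image_insert_eq] using hgen
  have h₂ : I.map (MonoidHom.snd T T) = ⊤ := by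
    simpa [I, MonoidHom.map_closure, Set.image_insert_eq, Subgroup.closure_pair_mul_right]
      using hgen
  refine (Subgroup.eq_top_or_exists_mulEquiv_eq_graph
    (Subgroup.surjective_fst_comp_subtype_iff.2 h₁)
    (Subgroup.surjective_snd_comp_subtype_iff.2 h₂)).resolve_right ?_
  rintro ⟨e, he⟩
  have graph_mem {x y : T} (h : (x, y) ∈ I) : e x = y := by rw [he] at h; exact h
  exact hb e (graph_mem (Subgroup.subset_closure (by simp)))
    (graph_mem (Subgroup.subset_closure (by simp)))

/-- Let `T` be a finite nonabelian simple group, `a ∈ T` an involution,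
`b ∈ T` with `⟨a, b⟩ = T`, and suppose `b^φ ≠ ba` for every automorphism `φ`
of `T` centralizing `a`. Then `(a, a)` and `(b, ba)` generate `T × T`. -/
theorem stmt_16 {T : Type*} [Group T] [Finite T] [IsSimpleGroup T]
    (hnab : ∃ x y : T, x * y ≠ y * x)
    (a b : T) (ha2 : a ^ 2 = 1) (ha1 : a ≠ 1)
    (hgen : Subgroup.closure {a, b} = ⊤)
    (hb : ∀ φ : MulAut T, φ a = a → φ b ≠ b * a) :
    Subgroup.closure ({(a, a), (b, b * a)} : Set (T × T)) = ⊤ :=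
  stmt_16_general a b hgen hb
end
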